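/- arXiv:2003.02167 — 3 statements merged into one kernel-verified Lean document; each statement's English description precedes it below -/
import Mathlib

section
/- Suppose real numbers V_k, V_{k+1}, V_{k+2}, V_{k+3} satisfy the three impact-map velocity equations V_{k+1} = -r·V_k + g_bar·T1 + F1(t_{k+1}) - F1(t_k), V_{k+2} = -r·V_{k+1} + g_bar·T2 + F1(t_{k+2}) - F1(t_{k+1}), and V_{k+3} = -r·V_{k+2} + g_bar·T3 + F1(t_{k+3}) - F1(t_{k+2}), together with the periodicity conditions V_{k+3} = V_k and F1(t_{k+3}) = F1(t_k). If 1 - r + r² ≠ 0 and r ≠ -1, then V_k = (1/(1 - r + r²)) · [ (r-1)·g_bar·T1 - g_bar·T2 + (1-r)·F1(t_k) + r·F1(t_{k+1}) - F1(t_{k+2}) + T·g_bar/(r+1) ], where T = T1 + T2 + T3. -/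
/-- Summing the three impact-map velocity equations with periodicity yields the
closed-form expression for V_k. -/
theorem stmt_1 (r gbar T1 T2 T3 T tk tk1 tk2 tk3 : ℝ) (F1 : ℝ → ℝ)
    (Vk Vk1 Vk2 Vk3 : ℝ)
    (hT1 : T1 = tk1 - tk) (hT2 : T2 = tk2 - tk1) (hT3 : T3 = tk3 - tk2)
    (hT : T = T1 + T2 + T3)
    (h1 : Vk1 = -r * Vk + gbar * T1 + F1 tk1 - F1 tk)
    (h2 : Vk2 = -r * Vk1 + gbar * T2 + F1 tk2 - F1 tk1)
    (h3 : Vk3 = -r * Vk2 + gbar * T3 + F1 tk3 - F1 tk2)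
    (hper : Vk3 = Vk) (hFper : F1 tk3 = F1 tk)
    (hr1 : 1 - r + r ^ 2 ≠ 0) (hr2 : r ≠ -1) :
    Vk = (1 / (1 - r + r ^ 2)) *
      ((r - 1) * gbar * T1 - gbar * T2 + (1 - r) * F1 tk + r * F1 tk1
        - F1 tk2 + T * gbar / (r + 1)) := by
  have hr2' : r + 1 ≠ 0 := fun h => hr2 (by linarith)
  have key : Vk * ((1 - r + r ^ 2) * (r + 1)) =
      gbar * (r ^ 2 * T1 - r * T2 + T3) + (1 - r ^ 2) * F1 tk
        - (1 + r) * F1 tk2 + r * (1 + r) * F1 tk1 := by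
    linear_combination h3 - r * h2 + r ^ 2 * h1 - hper + hFper
  rw [hT]
  field_simp
  linear_combination key
end

section
/- Suppose the three position equations for transitions P1, P2, P3 hold: 0 = -r·V_k·T1 + (g_bar/2)·T1² + F2(t_{k+1}) - F2(t_k) - F1(t_k)·T1; -d = -r·V_{k+1}·T2 + (g_bar/2)·T2² + F2(t_{k+2}) - F2(t_{k+1}) - F1(t_{k+1})·T2; d = -r·V_{k+2}·T3 + (g_bar/2)·T3² + F2(t_{k+3}) - F2(t_{k+2}) - F1(t_{k+2})·T3; together with the velocity maps V_{k+1} = -r·V_k + g_bar·T1 + F1(t_{k+1}) - F1(t_k) and V_{k+2} = -r·V_{k+1} + g_bar·T2 + F1(t_{k+2}) - F1(t_{k+1}), and the periodicity F2(t_{k+3}) = F2(t_k). If r·T1 - r²·T2 + r³·T3 ≠ 0, then V_k·(r³·T3 - r²·T2 + r·T1) = (g_bar/2)·(T1² + T2² + T3²) + F1(t_k)·(-r²·T3 + r·T2 - T1) + F1(t_{k+1})·(r²·T3 - r·T2 + r·T3 - T2) + r²·g_bar·T1·T3 - r·g_bar·T1·T2 - r·g_bar·T2·T3 - (1+r)·T3·F1(t_{k+2}).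 -/
/-- Adding the three position equations with the velocity maps and periodicity
of F2 yields a fourth equation for V_k. -/
theorem stmt_4 (r gbar d T1 T2 T3 tk tk1 tk2 tk3 Vk Vk1 Vk2 : ℝ) (F1 F2 : ℝ → ℝ)
    (hT1 : T1 = tk1 - tk) (hT2 : T2 = tk2 - tk1) (hT3 : T3 = tk3 - tk2)
    (hp1 : 0 = -r * Vk * T1 + (gbar / 2) * T1 ^ 2 + F2 tk1 - F2 tk - F1 tk * T1)
    (hp2 : -d = -r * Vk1 * T2 + (gbar / 2) * T2 ^ 2 + F2 tk2 - F2 tk1 - F1 tk1 * T2)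
    (hp3 : d = -r * Vk2 * T3 + (gbar / 2) * T3 ^ 2 + F2 tk3 - F2 tk2 - F1 tk2 * T3)
    (hv1 : Vk1 = -r * Vk + gbar * T1 + F1 tk1 - F1 tk)
    (hv2 : Vk2 = -r * Vk1 + gbar * T2 + F1 tk2 - F1 tk1)
    (hper : F2 tk3 = F2 tk)
    (hden : r * T1 - r ^ 2 * T2 + r ^ 3 * T3 ≠ 0) :
    Vk * (r ^ 3 * T3 - r ^ 2 * T2 + r * T1) =
      (gbar / 2) * (T1 ^ 2 + T2 ^ 2 + T3 ^ 2)
      + F1 tk * (-(r ^ 2) * T3 + r * T2 - T1)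
      + F1 tk1 * (r ^ 2 * T3 - r * T2 + r * T3 - T2)
      + r ^ 2 * gbar * T1 * T3 - r * gbar * T1 * T2 - r * gbar * T2 * T3
      - (1 + r) * T3 * F1 tk2 := by
  linear_combination hp1 + hp2 + hp3 - r*T2*hv1 - r*T3*hv2 + r^2*T3*hv1 + hper
end

section
/- Suppose the P1 velocity map V_{k+1} = -r·V_k + g_bar·T1 + F1(t_{k+1}) - F1(t_k) holds with F1 differentiable (F1' = f), and t_{k+1} is implicitly a smooth function of (t_k, V_k) via the position constraint. Then the partial derivative of the implicit impact time satisfies ∂t_{k+1}/∂V_k = -r·T1 / (r·V_k - g_bar·T1 - F1(t_{k+1}) + F1(t_k)), provided the denominator r·V_k - g_bar·T1 - F1(t_{k+1}) + F1(t_k) is nonzero, where the position constraint is G(t_k, V_k, t_{k+1}) := -r·V_k·(t_{k+1} - t_k) + (g_bar/2)(t_{k+1} - t_k)² + F2(t_{k+1}) - F2(t_k) - F1(t_k)·(t_{k+1} - t_k) = 0 and F2' = F1. -/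
open Filter

/-- Implicit differentiation of the impact time with respect to the impact
velocity: with the P1 position constraint G = 0 defining t_{k+1} as a smooth
function τ of V_k, the derivative satisfies
∂t_{k+1}/∂V_k = -r·T1 / (r·V_k - g_bar·T1 - F1(t_{k+1}) + F1(t_k)). -/
theorem stmt_16 (r gbar tk Vk : ℝ) (f F1 F2 : ℝ → ℝ) (τ : ℝ → ℝ) (τ' : ℝ)
    (hF1 : ∀ t, HasDerivAt F1 (f t) t)
    (hF2 : ∀ t, HasDerivAt F2 (F1 t) t)
    (hτ : HasDerivAt τ τ' Vk)
    (hG : ∀ᶠ v in nhds Vk,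
      -r * v * (τ v - tk) + (gbar / 2) * (τ v - tk) ^ 2
        + F2 (τ v) - F2 tk - F1 tk * (τ v - tk) = 0)
    (hden : r * Vk - gbar * (τ Vk - tk) - F1 (τ Vk) + F1 tk ≠ 0) :
    τ' = -r * (τ Vk - tk) / (r * Vk - gbar * (τ Vk - tk) - F1 (τ Vk) + F1 tk) := by
  have hA : HasDerivAt (fun v => -r * v * (τ v - tk))
      ((-r * 1) * (τ Vk - tk) + (-r * Vk) * τ') Vk :=
    (((hasDerivAt_id Vk).const_mul (-r)).mul (hτ.sub_const tk))
  have hB : HasDerivAt (fun v => (gbar / 2) * (τ v - tk) ^ 2)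
      ((gbar / 2) * (2 * (τ Vk - tk) ^ 1 * τ')) Vk :=
    ((hτ.sub_const tk).pow 2).const_mul (gbar / 2)
  have hC : HasDerivAt (fun v => F2 (τ v)) (F1 (τ Vk) * τ') Vk :=
    (hF2 (τ Vk)).comp Vk hτ
  have hE : HasDerivAt (fun v => F1 tk * (τ v - tk)) (F1 tk * τ') Vk :=
    (hτ.sub_const tk).const_mul (F1 tk)
  have hsum : HasDerivAt (fun v => -r * v * (τ v - tk) + (gbar / 2) * (τ v - tk) ^ 2
        + F2 (τ v) - F2 tk - F1 tk * (τ v - tk))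
      ((-r * 1) * (τ Vk - tk) + (-r * Vk) * τ'
        + (gbar / 2) * (2 * (τ Vk - tk) ^ 1 * τ') + F1 (τ Vk) * τ' - 0 - F1 tk * τ') Vk :=
    ((((hA.add hB).add hC).sub (hasDerivAt_const Vk (F2 tk))).sub hE)
  have hzero : HasDerivAt (fun v => -r * v * (τ v - tk) + (gbar / 2) * (τ v - tk) ^ 2
        + F2 (τ v) - F2 tk - F1 tk * (τ v - tk)) 0 Vk :=
    (hasDerivAt_const Vk (0 : ℝ)).congr_of_eventuallyEq hG
  have heq := hsum.unique hzero
  rw [eq_div_iff hden]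
  nlinarith [heq]
end
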